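/- For every α ∈ [1,∞] and every η ∈ [0,1] with η ≠ 1/2, the margin α-loss is classification-calibrated: inf over f ∈ ℝ with f·(2η-1) ≤ 0 of [η·l̃^α(f) + (1-η)·l̃^α(-f)] is strictly greater than inf over all f ∈ ℝ of [η·l̃^α(f) + (1-η)·l̃^α(-f)]. -/

import Mathlib

/-!
Write `l̃^α = φ ∘ σ`, where `φ(s) = -log s` or `φ(s) = c (1 - s^p)` with `c > 0`, `0 < p ≤ 1`:
in every case `φ` is antitone and convex on `(0, ∞)`, bounded below on `(0, 1)`, and
`φ'(1/2) ≠ 0`. As `σ(-f) = 1 - σ(f)`, convexity gives `l̃(f) + l̃(-f) ≥ 2 l̃(0)`, and together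
with monotonicity this shows `C_η(f) ≥ C_η(0) = l̃(0)` whenever `f (2η - 1) ≤ 0`. On the other hand
`C_η'(0) = (2η - 1) l̃'(0) ≠ 0`, so `0` is not a minimiser of `C_η` and the unrestricted infimum
lies strictly below `l̃(0)`.
-/

noncomputable def sigmoid (z : ℝ) : ℝ := 1 / (1 + Real.exp (-z))

/-- The margin `α`-loss for `α ∈ [1,∞]` (modeled as `α : EReal`):
`l̃^1(z) = -log σ(z)`, `l̃^∞(z) = 1 - σ(z)`, and
`l̃^α(z) = (α/(α-1))·(1 - σ(z)^{1-1/α})` for `α ∈ (1,∞)`. -/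
noncomputable def margAlphaLoss (α : EReal) (z : ℝ) : ℝ :=
  if α = 1 then -Real.log (sigmoid z)
  else if α = ⊤ then 1 - sigmoid z
  else (α.toReal / (α.toReal - 1)) * (1 - sigmoid z ^ (1 - 1/α.toReal))

open Set

lemma sigmoid_eq_real_sigmoid : sigmoid = Real.sigmoid :=
  funext fun _ => one_div _

noncomputable def condRisk (ℓ : ℝ → ℝ) (η f : ℝ) : ℝ :=
  η * ℓ f + (1 - η) * ℓ (-f)

section condRisk

variable {ℓ : ℝ → ℝ} {η : ℝ}

lemma condRisk_zero : condRisk ℓ η 0 = ℓ 0 := by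
  simp only [condRisk, neg_zero]; ring

lemma condRisk_zero_le_of_mul_nonpos (hanti : Antitone ℓ)
    (hmid : ∀ f, 2 * ℓ 0 ≤ ℓ f + ℓ (-f)) {f : ℝ} (hf : f * (2 * η - 1) ≤ 0) :
    condRisk ℓ η 0 ≤ condRisk ℓ η f := by
  have hsplit : condRisk ℓ η f = (η - 1/2) * (ℓ f - ℓ (-f)) + (ℓ f + ℓ (-f)) / 2 := by
    simp only [condRisk]; ring
  suffices 0 ≤ (η - 1/2) * (ℓ f - ℓ (-f)) by
    rw [condRisk_zero, hsplit]; linarith [hmid f]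
  rcases lt_trichotomy f 0 with hneg | rfl | hpos
  · have hη : 0 ≤ 2 * η - 1 := nonneg_of_mul_nonpos_right hf hneg
    have := hanti (show f ≤ -f by linarith)
    exact mul_nonneg (by linarith) (by linarith)
  · simp
  · have hη : 2 * η - 1 ≤ 0 := nonpos_of_mul_nonpos_right hf hpos
    have := hanti (show -f ≤ f by linarith)
    exact mul_nonneg_of_nonpos_of_nonpos (by linarith) (by linarith)

lemma hasDerivAt_condRisk_zero {d : ℝ} (hd : HasDerivAt ℓ d 0) :
    HasDerivAt (condRisk ℓ η) ((2 * η - 1) * d) 0 := by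
  have hneg : HasDerivAt (fun f => ℓ (-f)) (-d) 0 :=
    (hd.comp_of_eq 0 (hasDerivAt_neg' 0) neg_zero.symm).congr_deriv (mul_neg_one d)
  exact ((hd.const_mul η).add (hneg.const_mul (1 - η))).congr_deriv (by ring)

lemma exists_condRisk_lt_zero {d : ℝ} (hd : HasDerivAt ℓ d 0) (hd0 : d ≠ 0) (hne : η ≠ 1/2) :
    ∃ f, condRisk ℓ η f < condRisk ℓ η 0 := by
  by_contra! hmin
  have hloc : IsLocalMin (condRisk ℓ η) 0 :=
    IsMinOn.isLocalMin (fun f _ => hmin f) Filter.univ_mem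
  exact mul_ne_zero (by contrapose! hne; linarith) hd0
    (hloc.hasDerivAt_eq_zero (hasDerivAt_condRisk_zero hd))

lemma bddBelow_range_condRisk (hℓ : BddBelow (range ℓ)) (hη : η ∈ Icc 0 1) :
    BddBelow (range (condRisk ℓ η)) := by
  obtain ⟨m, hm⟩ := hℓ
  refine ⟨m, forall_mem_range.2 fun f => ?_⟩
  have h₁ := mul_le_mul_of_nonneg_left (hm (mem_range_self f)) hη.1
  have h₂ := mul_le_mul_of_nonneg_left (hm (mem_range_self (-f))) (sub_nonneg.2 hη.2)
  simp only [condRisk]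
  linarith

theorem condRisk_classification_calibrated (hanti : Antitone ℓ)
    (hmid : ∀ f, 2 * ℓ 0 ≤ ℓ f + ℓ (-f)) {d : ℝ} (hd : HasDerivAt ℓ d 0) (hd0 : d ≠ 0)
    (hℓ : BddBelow (range ℓ)) (hη : η ∈ Icc 0 1) (hne : η ≠ 1/2) :
    sInf (condRisk ℓ η '' {f | f * (2 * η - 1) ≤ 0}) > sInf (range (condRisk ℓ η)) := by
  obtain ⟨f₀, hf₀⟩ := exists_condRisk_lt_zero hd hd0 hne
  calc sInf (range (condRisk ℓ η)) ≤ condRisk ℓ η f₀ :=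
        csInf_le (bddBelow_range_condRisk hℓ hη) (mem_range_self f₀)
    _ < condRisk ℓ η 0 := hf₀
    _ ≤ sInf (condRisk ℓ η '' {f | f * (2 * η - 1) ≤ 0}) :=
        le_csInf ⟨_, mem_image_of_mem _ (by simp : (0 : ℝ) ∈ {f | f * (2 * η - 1) ≤ 0})⟩
          (forall_mem_image.2 fun _ hf => condRisk_zero_le_of_mul_nonpos hanti hmid hf)

end condRisk

section compSigmoid

variable {φ : ℝ → ℝ}

lemma antitone_comp_sigmoid (hφ : AntitoneOn φ (Ioi 0)) : Antitone (φ ∘ Real.sigmoid) :=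
  fun _ _ h => hφ (Real.sigmoid_pos _) (Real.sigmoid_pos _) (Real.sigmoid_le h)

lemma two_mul_comp_sigmoid_zero_le (hφ : ConvexOn ℝ (Ioi 0) φ) (f : ℝ) :
    2 * (φ ∘ Real.sigmoid) 0 ≤ (φ ∘ Real.sigmoid) f + (φ ∘ Real.sigmoid) (-f) := by
  have hs := Real.sigmoid_pos f
  have hs' : 0 < 1 - Real.sigmoid f := sub_pos.2 (Real.sigmoid_lt_one f)
  have := hφ.2 hs hs' (by norm_num : (0 : ℝ) ≤ 2⁻¹) (by norm_num : (0 : ℝ) ≤ 2⁻¹) (by norm_num)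
  simp only [smul_eq_mul, show 2⁻¹ * Real.sigmoid f + 2⁻¹ * (1 - Real.sigmoid f) = 2⁻¹ by ring]
    at this
  simp only [Function.comp, Real.sigmoid_zero, Real.sigmoid_neg]
  linarith

lemma hasDerivAt_comp_sigmoid_zero {d : ℝ} (hφ : HasDerivAt φ d 2⁻¹) :
    HasDerivAt (φ ∘ Real.sigmoid) (d / 4) 0 := by
  refine (hφ.comp_of_eq 0 (Real.hasDerivAt_sigmoid 0) Real.sigmoid_zero.symm).congr_deriv ?_
  rw [Real.sigmoid_zero]; ring

lemma bddBelow_range_comp_sigmoid (hφ : BddBelow (φ '' Ioo 0 1)) :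
    BddBelow (range (φ ∘ Real.sigmoid)) := by
  rwa [range_comp, Real.range_sigmoid]

end compSigmoid

theorem condRisk_comp_sigmoid_classification_calibrated {φ : ℝ → ℝ}
    (hanti : AntitoneOn φ (Ioi 0)) (hconv : ConvexOn ℝ (Ioi 0) φ) {d : ℝ}
    (hd : HasDerivAt φ d 2⁻¹) (hd0 : d ≠ 0) (hbdd : BddBelow (φ '' Ioo 0 1)) {η : ℝ}
    (hη : η ∈ Icc 0 1) (hne : η ≠ 1/2) :
    sInf (condRisk (φ ∘ Real.sigmoid) η '' {f | f * (2 * η - 1) ≤ 0})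
      > sInf (range (condRisk (φ ∘ Real.sigmoid) η)) :=
  condRisk_classification_calibrated (antitone_comp_sigmoid hanti)
    (two_mul_comp_sigmoid_zero_le hconv) (hasDerivAt_comp_sigmoid_zero hd)
    (div_ne_zero hd0 four_ne_zero) (bddBelow_range_comp_sigmoid hbdd) hη hne

lemma antitoneOn_neg_log : AntitoneOn (fun s => -Real.log s) (Ioi 0) :=
  fun _ hx _ _ hxy => neg_le_neg (Real.log_le_log hx hxy)

lemma convexOn_neg_log : ConvexOn ℝ (Ioi 0) (fun s => -Real.log s) :=
  strictConcaveOn_log_Ioi.concaveOn.neg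

lemma hasDerivAt_neg_log_inv_two : HasDerivAt (fun s => -Real.log s) (-2) 2⁻¹ :=
  (Real.hasDerivAt_log (by norm_num)).neg.congr_deriv (by norm_num)

lemma bddBelow_neg_log_image_Ioo : BddBelow ((fun s => -Real.log s) '' Ioo 0 1) :=
  ⟨0, forall_mem_image.2 fun _ hs => neg_nonneg.2 (Real.log_nonpos hs.1.le hs.2.le)⟩

section oneSubRpow

variable {c p : ℝ}

lemma antitoneOn_const_mul_one_sub_rpow (hc : 0 ≤ c) (hp : 0 ≤ p) :
    AntitoneOn (fun s => c * (1 - s ^ p)) (Ici 0) :=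
  fun _ hx _ _ hxy =>
    mul_le_mul_of_nonneg_left (sub_le_sub_left (Real.rpow_le_rpow hx hxy hp) 1) hc

lemma convexOn_const_mul_one_sub_rpow (hc : 0 ≤ c) (hp₀ : 0 ≤ p) (hp₁ : p ≤ 1) :
    ConvexOn ℝ (Ici 0) (fun s => c * (1 - s ^ p)) :=
  ((convexOn_const 1 (convex_Ici 0)).sub (Real.concaveOn_rpow hp₀ hp₁)).smul hc

lemma hasDerivAt_const_mul_one_sub_rpow {x : ℝ} (hx : x ≠ 0) :
    HasDerivAt (fun s => c * (1 - s ^ p)) (c * -(p * x ^ (p - 1))) x :=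
  ((Real.hasDerivAt_rpow_const (Or.inl hx)).const_sub 1).const_mul c

lemma bddBelow_const_mul_one_sub_rpow_image_Ioo (hc : 0 ≤ c) (hp : 0 ≤ p) :
    BddBelow ((fun s => c * (1 - s ^ p)) '' Ioo 0 1) :=
  ⟨0, forall_mem_image.2 fun _ hs =>
    mul_nonneg hc (sub_nonneg.2 (Real.rpow_le_one hs.1.le hs.2.le hp))⟩

end oneSubRpow

/-- The case `α = ∞` is `c = p = 1`. -/
lemma margAlphaLoss_eq_neg_log_or_rpow {α : EReal} (hα : 1 ≤ α) :
    margAlphaLoss α = (fun s => -Real.log s) ∘ Real.sigmoid ∨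
      ∃ c p : ℝ, 0 < c ∧ 0 < p ∧ p ≤ 1 ∧
        margAlphaLoss α = (fun s => c * (1 - s ^ p)) ∘ Real.sigmoid := by
  by_cases h1 : α = 1
  · left; ext z; simp [margAlphaLoss, h1, sigmoid_eq_real_sigmoid]
  right
  by_cases htop : α = ⊤
  · subst htop
    refine ⟨1, 1, one_pos, one_pos, le_rfl, ?_⟩
    ext z; simp [margAlphaLoss, h1, sigmoid_eq_real_sigmoid]
  lift α to ℝ using ⟨htop, ne_bot_of_le_ne_bot (EReal.coe_ne_bot 1) hα⟩
  have ha : 1 < α := by exact_mod_cast lt_of_le_of_ne hα (Ne.symm h1)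
  refine ⟨α / (α - 1), 1 - 1 / α, div_pos (by linarith) (by linarith),
    sub_pos.2 ((div_lt_one (by linarith)).2 ha), sub_le_self _ (by positivity), ?_⟩
  ext z; simp [margAlphaLoss, h1, sigmoid_eq_real_sigmoid]

/-- For every `α ∈ [1,∞]` and every `η ∈ [0,1]` with `η ≠ 1/2`, the margin `α`-loss is
classification-calibrated: the infimum of the conditional risk over `f` with
`f·(2η-1) ≤ 0` is strictly greater than the unrestricted infimum. -/
theorem margAlphaLoss_classification_calibrated
    (α : EReal) (hα : 1 ≤ α) (η : ℝ) (hη : η ∈ Set.Icc (0:ℝ) 1) (hne : η ≠ 1/2) :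
    sInf ((fun f : ℝ => η * margAlphaLoss α f + (1 - η) * margAlphaLoss α (-f)) ''
        {f : ℝ | f * (2 * η - 1) ≤ 0})
      > sInf (Set.range (fun f : ℝ => η * margAlphaLoss α f + (1 - η) * margAlphaLoss α (-f))) := by
  rcases margAlphaLoss_eq_neg_log_or_rpow hα with h | ⟨c, p, hc, hp₀, hp₁, h⟩ <;> rw [h]
  · exact condRisk_comp_sigmoid_classification_calibrated antitoneOn_neg_log convexOn_neg_log
      hasDerivAt_neg_log_inv_two (by norm_num) bddBelow_neg_log_image_Ioo hη hne
  · exact condRisk_comp_sigmoid_classification_calibrated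
      ((antitoneOn_const_mul_one_sub_rpow hc.le hp₀.le).mono Ioi_subset_Ici_self)
      ((convexOn_const_mul_one_sub_rpow hc.le hp₀.le hp₁).subset Ioi_subset_Ici_self
        (convex_Ioi 0))
      (hasDerivAt_const_mul_one_sub_rpow (by norm_num))
      (mul_ne_zero hc.ne' (neg_ne_zero.2 (by positivity)))
      (bddBelow_const_mul_one_sub_rpow_image_Ioo hc.le hp₀.le) hη hne
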